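/- arXiv:1311.5863 — 5 statements merged into one kernel-verified Lean document; each statement's English description precedes it below -/
import Mathlib

section
/- Every minimal vertex cut (minimal separator) of a chordal graph is a clique. -/
/-!
Let `a, b ∈ X` be non-adjacent. By minimality `X \ {a}` does not separate, so some `u`–`v` walk
meets `X` only in `a`; hence `a`, and likewise `b`, has a neighbour in the component of `u` in
`G - X` and one in the component of `v`. A shortest `a`–`b` path through either component is
chordless and has length at least `2`; the interiors of the two paths are disjoint and joined by
no edge, so together the paths form an induced cycle of length at least `4`.
-/

open SimpleGraph

/-- A graph is chordal if it contains no induced cycle of length 4 or greater. -/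
def IsChordal {V : Type*} (G : SimpleGraph V) : Prop :=
  ∀ n : ℕ, 4 ≤ n → IsEmpty (cycleGraph n ↪g G)

/-- `X` is a `u`-`v` separator: `u, v ∉ X` and every walk from `u` to `v` meets `X`. -/
def Separates {V : Type*} (G : SimpleGraph V) (X : Set V) (u v : V) : Prop :=
  u ∉ X ∧ v ∉ X ∧ ∀ p : G.Walk u v, ∃ x ∈ p.support, x ∈ X

lemma Fin.val_sub_eq_one_iff {n : ℕ} (hn : 2 ≤ n) {i j : Fin n} :
    (i - j).val = 1 ↔ (j.val + 1) % n = i.val := by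
  have hi := i.isLt
  have hj := j.isLt
  have hsucc : (j.val + 1) % n = if j.val + 1 = n then 0 else j.val + 1 := by
    split_ifs with h
    · rw [h, Nat.mod_self]
    · exact Nat.mod_eq_of_lt (by omega)
  have hsub : (n - j.val + i.val) % n =
      if j.val ≤ i.val then i.val - j.val else n - j.val + i.val := by
    split_ifs with h
    · rw [show n - j.val + i.val = i.val - j.val + n by omega, Nat.add_mod_right,
        Nat.mod_eq_of_lt (by omega)]
    · exact Nat.mod_eq_of_lt (by omega)
  rw [Fin.val_sub, hsub, hsucc]
  split_ifs <;> omega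

namespace SimpleGraph

variable {V : Type*} {G : SimpleGraph V}

lemma cycleGraph_adj_iff_succ_mod {n : ℕ} (hn : 2 ≤ n) {i j : Fin n} :
    (cycleGraph n).Adj i j ↔ (i.val + 1) % n = j.val ∨ (j.val + 1) % n = i.val := by
  rw [cycleGraph_adj', Fin.val_sub_eq_one_iff hn, Fin.val_sub_eq_one_iff hn, or_comm]

namespace Walk

variable {u v : V}

lemma two_le_length_of_not_adj (p : G.Walk u v) (hne : u ≠ v) (hadj : ¬ G.Adj u v) :
    2 ≤ p.length := by
  rcases p with _ | ⟨h, _ | ⟨_, _⟩⟩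
  · exact absurd rfl hne
  · exact absurd h hadj
  · simp

theorem isChordless_of_length_eq_dist (p : G.Walk u v) (hp : p.length = G.dist u v) :
    p.IsChordless := by
  -- a chord from position `i` to position `j ≥ i + 2` would shortcut `p`
  have hconsec : ∀ i j, i < j → j ≤ p.length → G.Adj (p.getVert i) (p.getVert j) →
      j = i + 1 := by
    intro i j hij hj h
    by_contra hne
    have := G.dist_le ((p.take i).append (cons h (p.drop j)))
    simp only [length_append, take_length, length_cons, drop_length] at this
    omega
  rw [isChordless_iff_forall_mem_edges]
  intro x y hx hy hxy
  obtain ⟨i, rfl, hi⟩ := mem_support_iff_exists_getVert.mp hx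
  obtain ⟨j, rfl, hj⟩ := mem_support_iff_exists_getVert.mp hy
  rcases lt_trichotomy i j with hij | rfl | hij
  · rw [mk_mem_edges_iff_exists]
    exact ⟨i, by omega, by rw [hconsec i j hij hj hxy]⟩
  · exact (G.irrefl hxy).elim
  · rw [Sym2.eq_swap, mk_mem_edges_iff_exists]
    exact ⟨j, by omega, by rw [hconsec j i hij hi hxy.symm]⟩

theorem IsChordless.map {W : Type*} {H : SimpleGraph W} (f : G ↪g H) {p : G.Walk u v}
    (hp : p.IsChordless) : (p.map f.toHom).IsChordless := by
  rw [isChordless_iff_forall_mem_edges]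
  intro x y hx hy hxy
  rw [support_map, List.mem_map] at hx hy
  obtain ⟨x, hx, rfl⟩ := hx
  obtain ⟨y, hy, rfl⟩ := hy
  rw [edges_map]
  exact List.mem_map_of_mem (hp.mem_edges hx hy (f.map_adj_iff.mp hxy))

theorem exists_isPath_isChordless_of_forall_mem_support {s : Set V} (p : G.Walk u v)
    (hs : ∀ x ∈ p.support, x ∈ s) :
    ∃ q : G.Walk u v, q.IsPath ∧ q.IsChordless ∧ ∀ x ∈ q.support, x ∈ s := by
  obtain ⟨q, hq⟩ := (p.induce s hs).reachable.exists_walk_length_eq_dist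
  let f : G.induce s ↪g G := Embedding.induce s
  have hq_mem : ∀ x ∈ (q.map f.toHom).support, x ∈ s := by
    intro x hx
    rw [support_map, List.mem_map] at hx
    obtain ⟨y, -, rfl⟩ := hx
    exact y.2
  exact ⟨q.map f.toHom, (q.isPath_of_length_eq_dist hq).map f.injective,
    (q.isChordless_of_length_eq_dist hq).map f, hq_mem⟩

lemma getVert_mod_length {p : G.Walk u u} {m : ℕ} (hm : m ≤ p.length) :
    p.getVert (m % p.length) = p.getVert m := by
  rcases hm.lt_or_eq with hm | rfl
  · rw [Nat.mod_eq_of_lt hm]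
  · rw [Nat.mod_self, getVert_zero, getVert_length]

theorem IsCycle.nonempty_cycleGraph_embedding {p : G.Walk u u} (hc : p.IsCycle)
    (hp : p.IsChordless) : Nonempty (cycleGraph p.length ↪g G) := by
  have hn := hc.three_le_length
  have hinj : ∀ {i j : ℕ}, i < p.length → j < p.length → p.getVert i = p.getVert j → i = j :=
    fun hi hj h => hc.getVert_injOn' (by simp only [Set.mem_ofPred_eq]; omega)
      (by simp only [Set.mem_ofPred_eq]; omega) h
  have hstep : ∀ i j : Fin p.length, (i.val + 1) % p.length = j.val →
      G.Adj (p.getVert i) (p.getVert j) := by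
    intro i j h
    rw [← h, getVert_mod_length (by omega)]
    exact p.adj_getVert_succ i.isLt
  have hchord : ∀ i j : Fin p.length, G.Adj (p.getVert i) (p.getVert j) →
      (i.val + 1) % p.length = j.val ∨ (j.val + 1) % p.length = i.val := by
    intro i j h
    obtain ⟨k, hk, he⟩ := (p.mk_mem_edges_iff_exists).mp (hp.mem_edges (p.getVert_mem_support _)
      (p.getVert_mem_support _) h)
    rw [← getVert_mod_length (m := k + 1) hk, Sym2.eq_iff] at he
    have hk' : (k + 1) % p.length < p.length := Nat.mod_lt _ (by omega)
    rcases he with ⟨h1, h2⟩ | ⟨h1, h2⟩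
    · left
      rw [← hinj hk i.isLt h1]
      exact hinj hk' j.isLt h2
    · right
      rw [← hinj hk j.isLt h1]
      exact hinj hk' i.isLt h2
  refine ⟨⟨⟨fun i => p.getVert i, fun i j h => Fin.ext (hinj i.isLt j.isLt h)⟩, ?_⟩⟩
  intro i j
  rw [cycleGraph_adj_iff_succ_mod (by omega)]
  exact ⟨hchord i j, fun h => h.elim (hstep i j) fun h => (hstep j i h).symm⟩

lemma IsPath.notMem_support_tail {p : G.Walk u v} (hp : p.IsPath) : u ∉ p.support.tail := by
  have := hp.support_nodup
  rw [← cons_tail_support, List.nodup_cons] at this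
  exact this.1

theorem IsPath.isCycle_append_reverse {P Q : G.Walk u v} (hP : P.IsPath) (hQ : Q.IsPath)
    (hPQ : ∀ x ∈ P.support, x ∈ Q.support → x = u ∨ x = v) (hlen : 2 ≤ P.length) :
    (P.append Q.reverse).IsCycle := by
  refine hP.isCycle_append hQ.reverse (fun x hxP hxQ => ?_) (by omega)
  have hxP' := List.mem_of_mem_tail hxP
  have hxQ' := List.mem_of_mem_tail hxQ
  rw [support_reverse, List.mem_reverse] at hxQ'
  rcases hPQ x hxP' hxQ' with rfl | rfl
  · exact hP.notMem_support_tail hxP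
  · exact hQ.reverse.notMem_support_tail hxQ

theorem IsChordless.append_reverse {P Q : G.Walk u v} (hP : P.IsChordless) (hQ : Q.IsChordless)
    (hPQ : ∀ x ∈ P.support, ∀ y ∈ Q.support, G.Adj x y → x = u ∨ x = v ∨ y = u ∨ y = v) :
    (P.append Q.reverse).IsChordless := by
  have hends : ∀ x, x = u ∨ x = v → x ∈ P.support ∧ x ∈ Q.support := by
    rintro x (rfl | rfl) <;> simp
  have hside : ∀ x ∈ P.support, ∀ y ∈ Q.support, G.Adj x y →
      (x ∈ P.support ∧ y ∈ P.support) ∨ (x ∈ Q.support ∧ y ∈ Q.support) := by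
    intro x hx y hy h
    rcases hPQ x hx y hy h with hx' | hx' | hy' | hy'
    · exact .inr ⟨(hends x (.inl hx')).2, hy⟩
    · exact .inr ⟨(hends x (.inr hx')).2, hy⟩
    · exact .inl ⟨hx, (hends y (.inl hy')).1⟩
    · exact .inl ⟨hx, (hends y (.inr hy')).1⟩
  rw [isChordless_iff_forall_mem_edges]
  intro x y hx hy h
  simp only [mem_support_append_iff, support_reverse, List.mem_reverse] at hx hy
  have hxy : (x ∈ P.support ∧ y ∈ P.support) ∨ (x ∈ Q.support ∧ y ∈ Q.support) := by
    rcases hx with hx | hx <;> rcases hy with hy | hy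
    · exact .inl ⟨hx, hy⟩
    · exact hside x hx y hy h
    · exact (hside y hy x hx h.symm).imp And.symm And.symm
    · exact .inr ⟨hx, hy⟩
  rw [edges_append, edges_reverse, List.mem_append, List.mem_reverse]
  rcases hxy with ⟨hx, hy⟩ | ⟨hx, hy⟩
  · exact .inl (hP.mem_edges hx hy h)
  · exact .inr (hQ.mem_edges hx hy h)

end Walk

def ReachableAvoiding (G : SimpleGraph V) (X : Set V) (x y : V) : Prop :=
  ∃ p : G.Walk x y, ∀ z ∈ p.support, z ∉ X

namespace ReachableAvoiding

variable {X : Set V} {x y z : V}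

lemma notMem_left (h : G.ReachableAvoiding X x y) : x ∉ X :=
  let ⟨p, hp⟩ := h
  hp x p.start_mem_support

lemma notMem_right (h : G.ReachableAvoiding X x y) : y ∉ X :=
  let ⟨p, hp⟩ := h
  hp y p.end_mem_support

lemma refl (hx : x ∉ X) : G.ReachableAvoiding X x x :=
  ⟨.nil, by simpa using hx⟩

lemma of_adj (h : G.Adj x y) (hx : x ∉ X) (hy : y ∉ X) : G.ReachableAvoiding X x y :=
  ⟨h.toWalk, by simp [hx, hy]⟩

lemma symm (h : G.ReachableAvoiding X x y) : G.ReachableAvoiding X y x :=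
  let ⟨p, hp⟩ := h
  ⟨p.reverse, by simpa using hp⟩

lemma trans (h : G.ReachableAvoiding X x y) (h' : G.ReachableAvoiding X y z) :
    G.ReachableAvoiding X x z :=
  let ⟨p, hp⟩ := h
  let ⟨q, hq⟩ := h'
  ⟨p.append q, fun w hw => (Walk.mem_support_append_iff p q).mp hw |>.elim (hp w) (hq w)⟩

lemma of_mem_support (p : G.Walk x y) (hp : ∀ w ∈ p.support, w ∉ X) (hz : z ∈ p.support) :
    G.ReachableAvoiding X x z := by
  classical
  exact ⟨p.takeUntil z hz, fun w hw => hp w (p.support_takeUntil_subset_support hz hw)⟩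

end ReachableAvoiding

theorem Walk.exists_reachableAvoiding_adj {X : Set V} {c : V} :
    ∀ {x y : V} (p : G.Walk x y), c ∈ p.support → x ≠ c → (∀ z ∈ p.support, z ∈ X → z = c) →
      ∃ s, G.ReachableAvoiding X x s ∧ G.Adj s c
  | _, _, .nil, hc, hx, _ => absurd (Walk.mem_support_nil_iff.mp hc).symm hx
  | x, _, .cons (v := m) h q, hc, hx, hX => by
    have hxX : x ∉ X := fun hxX => hx (hX x (by simp) hxX)
    by_cases hm : m = c
    · exact ⟨x, .refl hxX, hm ▸ h⟩
    have hmX : m ∉ X := fun hmX => hm (hX m (by simp) hmX)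
    have hcq : c ∈ q.support := by
      rw [Walk.support_cons, List.mem_cons] at hc
      exact hc.resolve_left (Ne.symm hx)
    obtain ⟨s, hs, hsc⟩ := q.exists_reachableAvoiding_adj hcq hm (fun z hz => hX z (by simp [hz]))
    exact ⟨s, (ReachableAvoiding.of_adj h hxX hmX).trans hs, hsc⟩

theorem exists_walk_of_reachableAvoiding_adj {X : Set V} {u a b s t : V}
    (hs : G.ReachableAvoiding X u s) (ht : G.ReachableAvoiding X u t)
    (ha : G.Adj s a) (hb : G.Adj t b) :
    ∃ p : G.Walk a b, ∀ x ∈ p.support, x = a ∨ x = b ∨ G.ReachableAvoiding X u x := by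
  obtain ⟨w, hw⟩ := hs.symm.trans ht
  refine ⟨.cons ha.symm (w.concat hb), fun x hx => ?_⟩
  simp only [Walk.support_cons, Walk.support_concat, List.mem_cons, List.mem_append,
    List.mem_nil_iff, or_false] at hx
  rcases hx with hx | hx | hx
  · exact .inl hx
  · exact .inr (.inr (hs.trans (.of_mem_support w hw hx)))
  · exact .inr (.inl hx)

end SimpleGraph

section Separates

variable {V : Type*} {G : SimpleGraph V} {X : Set V} {u v : V}

theorem Separates.not_reachableAvoiding (h : Separates G X u v) :
    ¬ G.ReachableAvoiding X u v := fun ⟨p, hp⟩ =>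
  let ⟨x, hx, hxX⟩ := h.2.2 p
  hp x hx hxX

theorem Separates.not_eq_or_adj (h : Separates G X u v) {x y : V}
    (hx : G.ReachableAvoiding X u x) (hy : G.ReachableAvoiding X v y) : ¬ (x = y ∨ G.Adj x y) := by
  rintro (rfl | hxy)
  · exact h.not_reachableAvoiding (hx.trans hy.symm)
  · exact h.not_reachableAvoiding
      ((hx.trans (.of_adj hxy hx.notMem_right hy.notMem_right)).trans hy.symm)

theorem Separates.exists_walk_of_minimal (h : Separates G X u v)
    (hmin : ∀ Y : Set V, Y ⊂ X → ¬ Separates G Y u v) {c : V} (hc : c ∈ X) :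
    ∃ p : G.Walk u v, c ∈ p.support ∧ ∀ z ∈ p.support, z ∈ X → z = c := by
  obtain ⟨p, hp⟩ : ∃ p : G.Walk u v, ∀ x ∈ p.support, x ∉ X \ {c} := by
    have := hmin _ (Set.sdiff_singleton_ssubset.mpr hc)
    simp only [Separates, not_and, not_forall, not_exists, not_and] at this
    exact this (fun hu => h.1 hu.1) (fun hv => h.2.1 hv.1)
  have honly : ∀ z ∈ p.support, z ∈ X → z = c := fun z hz hzX => by
    by_contra hzc
    exact hp z hz ⟨hzX, hzc⟩
  obtain ⟨x, hx, hxX⟩ := h.2.2 p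
  exact ⟨p, honly x hx hxX ▸ hx, honly⟩

theorem Separates.exists_adj_of_minimal (h : Separates G X u v)
    (hmin : ∀ Y : Set V, Y ⊂ X → ¬ Separates G Y u v) {c : V} (hc : c ∈ X) :
    (∃ s, G.ReachableAvoiding X u s ∧ G.Adj s c) ∧
      ∃ t, G.ReachableAvoiding X v t ∧ G.Adj t c := by
  obtain ⟨p, hcp, hp⟩ := h.exists_walk_of_minimal hmin hc
  refine ⟨p.exists_reachableAvoiding_adj hcp (fun e => h.1 (e ▸ hc)) hp,
    p.reverse.exists_reachableAvoiding_adj (by simpa using hcp) (fun e => h.2.1 (e ▸ hc))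
      (fun z hz => hp z (by simpa using hz))⟩

end Separates

/-- Every minimal vertex cut (minimal separator) of a chordal graph is a clique. -/
theorem minimal_separator_isClique {V : Type*} (G : SimpleGraph V) (hG : IsChordal G)
    (X : Set V) (u v : V) (hsep : Separates G X u v)
    (hmin : ∀ Y : Set V, Y ⊂ X → ¬ Separates G Y u v) :
    G.IsClique X := by
  intro a ha b hb hab
  by_contra hadj
  obtain ⟨⟨sa, hsa, hsaa⟩, ⟨ta, hta, htaa⟩⟩ := hsep.exists_adj_of_minimal hmin ha
  obtain ⟨⟨sb, hsb, hsbb⟩, ⟨tb, htb, htbb⟩⟩ := hsep.exists_adj_of_minimal hmin hb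
  obtain ⟨P₀, hP₀⟩ := exists_walk_of_reachableAvoiding_adj hsa hsb hsaa hsbb
  obtain ⟨Q₀, hQ₀⟩ := exists_walk_of_reachableAvoiding_adj hta htb htaa htbb
  obtain ⟨P, hP, hPc, hPu⟩ := P₀.exists_isPath_isChordless_of_forall_mem_support hP₀
  obtain ⟨Q, hQ, hQc, hQv⟩ := Q₀.exists_isPath_isChordless_of_forall_mem_support hQ₀
  have hPQ : ∀ x ∈ P.support, ∀ y ∈ Q.support, x = y ∨ G.Adj x y →
      x = a ∨ x = b ∨ y = a ∨ y = b := by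
    intro x hx y hy h
    by_contra! hne
    exact hsep.not_eq_or_adj ((hPu x hx).resolve_left hne.1 |>.resolve_left hne.2.1)
      ((hQv y hy).resolve_left hne.2.2.1 |>.resolve_left hne.2.2.2) h
  have hPlen := P.two_le_length_of_not_adj hab hadj
  have hQlen := Q.two_le_length_of_not_adj hab hadj
  have hcycle := hP.isCycle_append_reverse hQ
    (fun x hx hx' => by have := hPQ x hx x hx' (.inl rfl); tauto) hPlen
  obtain ⟨e⟩ := hcycle.nonempty_cycleGraph_embedding
    (hPc.append_reverse hQc fun x hx y hy h => hPQ x hx y hy (.inr h))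
  exact (hG _ (by simp only [Walk.length_append, Walk.length_reverse]; omega)).false e
end

section
/- Every chordal graph that is not a complete graph contains at least two nonadjacent simplicial vertices. -/
open SimpleGraph

/-- A vertex is simplicial if its neighbourhood is a clique. -/
def IsSimplicial {V : Type*} (G : SimpleGraph V) (s : V) : Prop :=
  G.IsClique (G.neighborSet s)

/-!
Dirac's argument. Let `v` have a non-neighbour `w`, let `C` be the component of `w` in
`G - N[v]` and `S = N(C) ⊆ N(v)`. Two nonadjacent `s, t ∈ S` would be joined by a shortest path
through `C`, which closes up with `v` to an induced cycle of length at least `4`; so `S` is a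
clique. By induction `G[C ∪ S]` is complete or has two nonadjacent simplicial vertices, so in
either case it has a simplicial vertex in `C`; since every neighbour of a vertex of `C` lies in
`C ∪ S`, this vertex is simplicial in `G`, and it is not adjacent to `v`. Doing this once from a
nonadjacent pair `x, y` and once more from the vertex found gives two nonadjacent simplicial
vertices.
-/

namespace SimpleGraph

variable {V : Type*} {G : SimpleGraph V}

theorem cycleGraph_adj_of_val_lt {n : ℕ} {i j : Fin n} (hij : i.val < j.val) :
    (cycleGraph n).Adj i j ↔ j.val = i.val + 1 ∨ (i.val = 0 ∧ j.val = n - 1) := by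
  rw [cycleGraph_adj', Fin.sub_def, Fin.sub_def]
  have hji : (n - j.val + i.val) % n = n - j.val + i.val := Nat.mod_eq_of_lt (by omega)
  have hij' : (n - i.val + j.val) % n = j.val - i.val := by
    rw [show n - i.val + j.val = j.val - i.val + n by omega, Nat.add_mod_right,
      Nat.mod_eq_of_lt (by omega)]
  simp only [hji, hij']
  omega

theorem nonempty_embedding_cycleGraph {n : ℕ} (f : ℕ → V)
    (hf : ∀ i j, i < j → j < n → f i ≠ f j)
    (hadj : ∀ i j, i < j → j < n → (G.Adj (f i) (f j) ↔ j = i + 1 ∨ (i = 0 ∧ j = n - 1))) :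
    Nonempty (cycleGraph n ↪g G) := by
  have hlt : ∀ {i j : Fin n}, i.val < j.val → (G.Adj (f i) (f j) ↔ (cycleGraph n).Adj i j) :=
    fun h => (hadj _ _ h (Fin.is_lt _)).trans (cycleGraph_adj_of_val_lt h).symm
  refine ⟨⟨⟨fun i => f i, fun i j hij => ?_⟩, fun {i j} => ?_⟩⟩
  · by_contra hne
    rcases Nat.lt_or_gt_of_ne (Fin.val_ne_of_ne hne) with h | h
    · exact hf _ _ h j.is_lt hij
    · exact hf _ _ h i.is_lt hij.symm
  · rcases lt_trichotomy i.val j.val with h | h | h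
    · exact hlt h
    · rw [Fin.ext h]; simp
    · rw [G.adj_comm, (cycleGraph n).adj_comm]; exact hlt h

theorem Walk.not_adj_getVert_of_length_eq_dist {u v : V} (p : G.Walk u v)
    (hp : p.length = G.dist u v) {i j : ℕ} (hij : i + 1 < j) (hj : j ≤ p.length) :
    ¬G.Adj (p.getVert i) (p.getVert j) := by
  intro hadj
  let shortcut : G.Walk u v := (p.take i).append (.cons hadj (p.drop j))
  have : shortcut.length < p.length := by
    simp only [shortcut, Walk.length_append, Walk.length_cons, Walk.take_length, Walk.drop_length]
    omega
  exact absurd (dist_le shortcut) (by omega)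

theorem IsChordal.induce (hG : IsChordal G) (s : Set V) : IsChordal (G.induce s) :=
  fun n hn => ⟨fun e => (hG n hn).false ((Embedding.induce s).comp e)⟩

theorem IsChordal.adj_of_walk_outside_closedNeighborhood (hG : IsChordal G) {v s t : V}
    (hvs : G.Adj v s) (hvt : G.Adj v t) (hst : s ≠ t) (p : G.Walk s t)
    (hp : ∀ z ∈ p.support, z ∈ {z | z = s ∨ z = t ∨ (z ≠ v ∧ ¬G.Adj v z)}) :
    G.Adj s t := by
  by_contra hnadj
  have hreach : (G.induce _).Reachable _ _ := ⟨p.induce _ hp⟩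
  obtain ⟨q, hq⟩ := hreach.exists_walk_length_eq_dist
  have hlen : 2 ≤ q.length := hq ▸ hreach.one_lt_dist_of_ne_of_not_adj (by simpa) hnadj
  have hinj : ∀ {i j}, i ≤ q.length → j ≤ q.length → (q.getVert i : V) = q.getVert j → i = j :=
    fun hi hj h => (q.isPath_of_length_eq_dist hq).getVert_injOn hi hj (Subtype.ext h)
  have hapex : ∀ i ≤ q.length,
      (q.getVert i : V) ≠ v ∧ (G.Adj v (q.getVert i) ↔ i = 0 ∨ i = q.length) := by
    intro i hi
    rcases Nat.eq_zero_or_pos i with rfl | hi0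
    · simpa using ⟨hvs.ne', hvs⟩
    rcases hi.eq_or_lt with rfl | hiL
    · simpa using ⟨hvt.ne', hvt⟩
    rcases (q.getVert i).prop with h | h | h
    · exact absurd (hinj (i := i) (j := 0) hi (by omega) (by simpa using h)) (by omega)
    · exact absurd (hinj (i := i) (j := q.length) hi le_rfl (by simpa using h)) (by omega)
    · exact ⟨h.1, iff_of_false h.2 (by omega)⟩
  let f : ℕ → V := fun i => if i ≤ q.length then q.getVert i else v
  refine (hG (q.length + 2) (by omega)).false (nonempty_embedding_cycleGraph f ?_ ?_).some
  · intro i j hij hj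
    rcases Nat.lt_or_ge q.length j with hjL | hjL
    · simpa [f, show i ≤ q.length by omega, hjL.not_ge] using (hapex i (by omega)).1
    · simp only [f, show i ≤ q.length by omega, hjL, if_true]
      exact fun h => absurd (hinj (by omega) hjL h) (by omega)
  · intro i j hij hj
    rcases Nat.lt_or_ge q.length j with hjL | hjL
    · simp only [f, show i ≤ q.length by omega, hjL.not_ge, if_true, if_false]
      rw [G.adj_comm, (hapex i (by omega)).2]
      omega
    · simp only [f, show i ≤ q.length by omega, hjL, if_true]
      refine ⟨fun h => ?_, ?_⟩
      · by_contra hne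
        exact q.not_adj_getVert_of_length_eq_dist hq (i := i) (j := j) (by omega) hjL h
      · rintro (rfl | ⟨-, rfl⟩)
        · exact q.adj_getVert_succ (by omega)
        · omega

theorem IsSimplicial.of_induce {U : Set V} {a : U} (ha : IsSimplicial (G.induce U) a)
    (hN : G.neighborSet a ⊆ U) : IsSimplicial G a := by
  intro x hx y hy hxy
  exact ha (show (⟨x, hN hx⟩ : U) ∈ _ from hx) (show (⟨y, hN hy⟩ : U) ∈ _ from hy)
    (Subtype.coe_ne_coe.mp hxy)

theorem exists_isSimplicial_pair_of_forall_not_adj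
    (h : ∀ v w, v ≠ w → ¬G.Adj v w → ∃ a, a ≠ v ∧ ¬G.Adj v a ∧ IsSimplicial G a)
    (hnc : ∃ x y, x ≠ y ∧ ¬G.Adj x y) :
    ∃ a b, a ≠ b ∧ ¬G.Adj a b ∧ IsSimplicial G a ∧ IsSimplicial G b := by
  obtain ⟨x, y, hxy, hnxy⟩ := hnc
  obtain ⟨a, hax, hnxa, ha⟩ := h x y hxy hnxy
  obtain ⟨b, hba, hnab, hb⟩ := h a x hax (fun hax' => hnxa hax'.symm)
  exact ⟨a, b, hba.symm, hnab, ha, hb⟩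

theorem exists_isSimplicial_not_mem_of_isClique
    (h : ∀ v w, v ≠ w → ¬G.Adj v w → ∃ a, a ≠ v ∧ ¬G.Adj v a ∧ IsSimplicial G a)
    {K : Set V} (hK : G.IsClique K) {w : V} (hw : w ∉ K) : ∃ a ∉ K, IsSimplicial G a := by
  by_cases hnc : ∃ x y, x ≠ y ∧ ¬G.Adj x y
  · obtain ⟨a, b, hab, hnab, ha, hb⟩ := exists_isSimplicial_pair_of_forall_not_adj h hnc
    by_cases haK : a ∈ K
    · exact ⟨b, fun hbK => hnab (hK haK hbK hab), hb⟩
    · exact ⟨a, haK, ha⟩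
  · push Not at hnc
    exact ⟨w, hw, fun x _ y _ hxy => hnc x y hxy⟩

theorem IsChordal.exists_isSimplicial_not_adj_of_induce (hG : IsChordal G) {v w : V}
    (hvw : v ≠ w) (hnadj : ¬G.Adj v w)
    (ih : ∀ U : Set V, v ∉ U → ∀ x y : U, x ≠ y → ¬(G.induce U).Adj x y →
      ∃ a, a ≠ x ∧ ¬(G.induce U).Adj x a ∧ IsSimplicial (G.induce U) a) :
    ∃ a, a ≠ v ∧ ¬G.Adj v a ∧ IsSimplicial G a := by
  set X : Set V := {z | z ≠ v ∧ ¬G.Adj v z}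
  set C : Set V := {z | ∃ p : G.Walk w z, ∀ y ∈ p.support, y ∈ X}
  set S : Set V := {s | G.Adj v s ∧ ∃ c ∈ C, G.Adj c s}
  have hCX : C ⊆ X := fun c ⟨p, hp⟩ => hp c p.end_mem_support
  have hwC : w ∈ C := ⟨.nil, by simpa [X] using ⟨hvw.symm, hnadj⟩⟩
  have hvCS : v ∉ C ∪ S := by
    rintro (hvC | ⟨hvv, -⟩)
    exacts [(hCX hvC).1 rfl, G.irrefl hvv]
  have hCS : ∀ c ∈ C, G.neighborSet c ⊆ C ∪ S := by
    rintro c ⟨p, hp⟩ z (hcz : G.Adj c z)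
    by_cases hz : z ∈ X
    · refine Or.inl ⟨p.concat hcz, fun y hy => ?_⟩
      rw [Walk.support_concat, List.mem_append, List.mem_singleton] at hy
      rcases hy with hy | rfl
      exacts [hp y hy, hz]
    · refine Or.inr ⟨?_, c, ⟨p, hp⟩, hcz⟩
      by_contra hvz
      refine hz ⟨?_, hvz⟩
      rintro rfl
      exact (hp c p.end_mem_support).2 hcz.symm
  have hSclique : G.IsClique S := by
    rintro s ⟨hvs, c, ⟨p, hp⟩, hcs⟩ t ⟨hvt, d, ⟨q, hq⟩, hdt⟩ hst
    refine hG.adj_of_walk_outside_closedNeighborhood hvs hvt hst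
      (.cons hcs.symm ((p.reverse.append q).concat hdt)) fun z hz => ?_
    simp only [Walk.support_cons, Walk.support_concat, Walk.support_append, Walk.support_reverse,
      List.mem_cons, List.mem_append, List.mem_reverse, List.not_mem_nil, or_false] at hz
    rcases hz with rfl | (hz | hz) | rfl
    · exact Or.inl rfl
    · exact Or.inr (Or.inr (hp z hz))
    · exact Or.inr (Or.inr (hq z (List.mem_of_mem_tail hz)))
    · exact Or.inr (Or.inl rfl)
  obtain ⟨a, haS, ha⟩ := exists_isSimplicial_not_mem_of_isClique (ih (C ∪ S) hvCS)
    (K := Subtype.val ⁻¹' S) (fun x hx y hy hxy => hSclique hx hy (Subtype.coe_ne_coe.mpr hxy))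
    (w := ⟨w, Or.inl hwC⟩) (fun hwS => hnadj hwS.1)
  have haC : (a : V) ∈ C := a.prop.resolve_right haS
  exact ⟨a, (hCX haC).1, (hCX haC).2, ha.of_induce (hCS a haC)⟩

theorem IsChordal.exists_isSimplicial_not_adj [Finite V] (hG : IsChordal G) {v w : V}
    (hvw : v ≠ w) (hnadj : ¬G.Adj v w) : ∃ a, a ≠ v ∧ ¬G.Adj v a ∧ IsSimplicial G a := by
  induction h : Nat.card V using Nat.strong_induction_on generalizing V with
  | _ n ih =>
    refine hG.exists_isSimplicial_not_adj_of_induce hvw hnadj fun U hvU x y hxy hnxy => ?_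
    exact ih _ (h ▸ Finite.card_subtype_lt hvU) (hG.induce U) hxy hnxy rfl

end SimpleGraph

/-- Every chordal graph that is not a complete graph contains at least two nonadjacent
simplicial vertices. -/
theorem chordal_not_complete_two_nonadjacent_simplicial {V : Type*} [Fintype V]
    (G : SimpleGraph V) (hG : IsChordal G)
    (hnc : ∃ x y : V, x ≠ y ∧ ¬ G.Adj x y) :
    ∃ a b : V, a ≠ b ∧ ¬ G.Adj a b ∧ IsSimplicial G a ∧ IsSimplicial G b :=
  exists_isSimplicial_pair_of_forall_not_adj (fun _ _ => hG.exists_isSimplicial_not_adj) hnc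
end

section
/- Every Hamiltonian chordal graph on n ≥ 3 vertices is pancyclic; that is, it contains a cycle of length m for every integer 3 ≤ m ≤ n. -/
/-!
A chordal graph has no induced cycle of length at least 4, so every such cycle has a chord.
Among the chords of a cycle, one cutting off the shortest arc cuts off an arc of exactly two
edges: otherwise that arc and the chord would form a shorter chordless cycle of length at
least 4. Such a chord lets the cycle skip one vertex, so a cycle of length `k ≥ 4` yields one
of length `k - 1`, and we descend from the Hamiltonian cycle.
-/

open SimpleGraph

namespace SimpleGraph

variable {V : Type*} {G : SimpleGraph V}

theorem cycleGraph_adj_iff_val {n : ℕ} {i j : Fin (n + 2)} :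
    (cycleGraph (n + 2)).Adj i j ↔ i.val + 1 = j.val ∨ j.val + 1 = i.val ∨
      (i.val = 0 ∧ j.val = n + 1) ∨ (j.val = 0 ∧ i.val = n + 1) := by
  rw [cycleGraph_adj']
  rcases lt_trichotomy i j with h | rfl | h
  · rw [Fin.coe_sub_iff_lt.mpr h, Fin.coe_sub_iff_le.mpr h.le]
    have : i.val < j.val := h
    omega
  · simp only [sub_self, Fin.val_zero]
    omega
  · rw [Fin.coe_sub_iff_le.mpr h.le, Fin.coe_sub_iff_lt.mpr h]
    have : j.val < i.val := h
    omega

/-- The vertex sequence `v 0, …, v l` of a path of length `l`; values of `v` beyond `l` are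
irrelevant. A cycle of length `l + 1` is encoded as such a path with `G.Adj (v l) (v 0)`. -/
structure IsPathSeq (G : SimpleGraph V) (v : ℕ → V) (l : ℕ) : Prop where
  injOn : Set.InjOn v (Set.Iic l)
  adj : ∀ i < l, G.Adj (v i) (v (i + 1))

namespace IsPathSeq

variable {v : ℕ → V} {l : ℕ}

lemma shift (hv : G.IsPathSeq v l) {a m : ℕ} (h : a + m ≤ l) :
    G.IsPathSeq (fun k ↦ v (a + k)) m where
  injOn x hx y hy hxy := by
    simp only [Set.mem_Iic] at hx hy
    have := hv.injOn (show a + x ≤ l by omega) (show a + y ≤ l by omega) hxy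
    omega
  adj i hi := by simpa [add_assoc] using hv.adj (a + i) (by omega)

lemma skip (hv : G.IsPathSeq v (l + 1)) {i : ℕ} (hi : i + 2 ≤ l + 1)
    (hchord : G.Adj (v i) (v (i + 2))) :
    G.IsPathSeq (fun k ↦ v (if k ≤ i then k else k + 1)) l where
  injOn x hx y hy hxy := by
    simp only [Set.mem_Iic] at hx hy
    have := hv.injOn (show (if x ≤ i then x else x + 1) ≤ l + 1 by split_ifs <;> omega)
      (show (if y ≤ i then y else y + 1) ≤ l + 1 by split_ifs <;> omega) hxy
    split_ifs at this <;> omega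
  adj k hk := by
    rcases lt_trichotomy k i with h | rfl | h
    · simpa [h.le, Nat.succ_le_of_lt h] using hv.adj k (by omega)
    · simpa using hchord
    · simpa only [if_neg (show ¬k ≤ i by omega), if_neg (show ¬k + 1 ≤ i by omega)]
        using hv.adj (k + 1) (by omega)

lemma injective_fin (hv : G.IsPathSeq v l) : Function.Injective fun i : Fin (l + 1) ↦ v i :=
  fun i j h ↦ Fin.ext (hv.injOn (Nat.le_of_lt_succ i.2) (Nat.le_of_lt_succ j.2) h)

lemma adj_of_cycleGraph_adj (hv : G.IsPathSeq v (l + 1)) (hclose : G.Adj (v (l + 1)) (v 0))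
    {i j : Fin (l + 2)} (h : (cycleGraph (l + 2)).Adj i j) : G.Adj (v i) (v j) := by
  rcases cycleGraph_adj_iff_val.mp h with h | h | ⟨hi, hj⟩ | ⟨hj, hi⟩
  · rw [← h]; exact hv.adj _ (by omega)
  · rw [← h]; exact (hv.adj _ (by omega)).symm
  · rw [hi, hj]; exact hclose.symm
  · rw [hi, hj]; exact hclose

lemma cycleGraph_isContained (hv : G.IsPathSeq v (l + 1)) (hclose : G.Adj (v (l + 1)) (v 0)) :
    cycleGraph (l + 2) ⊑ G :=
  ⟨⟨⟨fun i ↦ v i, hv.adj_of_cycleGraph_adj hclose⟩, hv.injective_fin⟩⟩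

end IsPathSeq

lemma Walk.IsCycle.isPathSeq_getVert {u : V} {c : G.Walk u u} (hc : c.IsCycle) :
    G.IsPathSeq c.getVert (c.length - 1) ∧ G.Adj (c.getVert (c.length - 1)) (c.getVert 0) := by
  have hlen := hc.three_le_length
  refine ⟨⟨hc.getVert_injOn', fun i hi ↦ c.adj_getVert_succ (by omega)⟩, ?_⟩
  have := c.adj_getVert_succ (i := c.length - 1) (by omega)
  rw [Nat.sub_add_cancel (by omega), Walk.getVert_length] at this
  simpa using this

end SimpleGraph

namespace IsChordal

variable {V : Type*} {G : SimpleGraph V} {v : ℕ → V}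

lemma exists_chord (hG : IsChordal G) {n : ℕ} (hv : G.IsPathSeq v (n + 3))
    (hclose : G.Adj (v (n + 3)) (v 0)) :
    ∃ a b, a + 2 ≤ b ∧ b ≤ n + 3 ∧ (0 < a ∨ b < n + 3) ∧ G.Adj (v a) (v b) := by
  by_contra! hno
  refine (hG (n + 4) (by omega)).false
    { toFun := fun i ↦ v i
      inj' := hv.injective_fin
      map_rel_iff' := fun {i j} ↦ ⟨fun h ↦ ?_, hv.adj_of_cycleGraph_adj hclose⟩ }
  have hne : i.val ≠ j.val := fun e ↦ h.ne (congrArg v e)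
  have hi := i.isLt
  have hj := j.isLt
  rw [cycleGraph_adj_iff_val]
  by_contra hfar
  rcases Nat.lt_or_gt_of_ne hne with hij | hji
  · exact hno i j (by omega) (by omega) (by omega) h
  · exact hno j i (by omega) (by omega) (by omega) h.symm

lemma exists_adj_add_two (hG : IsChordal G) {l : ℕ} (hv : G.IsPathSeq v l) (hl : 2 ≤ l)
    (hclose : G.Adj (v l) (v 0)) : ∃ i, i + 2 ≤ l ∧ G.Adj (v i) (v (i + 2)) := by
  induction l using Nat.strong_induction_on generalizing v with
  | _ l ih =>
  obtain rfl | hl3 := hl.eq_or_lt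
  · exact ⟨0, le_rfl, hclose.symm⟩
  obtain ⟨n, rfl⟩ : ∃ n, l = n + 3 := ⟨l - 3, by omega⟩
  obtain ⟨a, b, hab, hb, hshort, hchord⟩ := hG.exists_chord hv hclose
  -- the chord closes the strictly shorter cycle `v a, …, v b`
  have hclose' : G.Adj (v (a + (b - a))) (v (a + 0)) := by
    rwa [Nat.add_sub_cancel' (by omega), add_zero, G.adj_comm]
  obtain ⟨i, hi, hadj⟩ := ih (b - a) (by omega) (hv.shift (a := a) (by omega)) (by omega) hclose'
  exact ⟨a + i, by omega, by simpa [add_assoc] using hadj⟩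

lemma exists_isPathSeq_pred (hG : IsChordal G) {l : ℕ} (hv : G.IsPathSeq v (l + 1))
    (hl : 2 ≤ l) (hclose : G.Adj (v (l + 1)) (v 0)) :
    ∃ w, G.IsPathSeq w l ∧ G.Adj (w l) (w 0) := by
  obtain ⟨i, hi, hchord⟩ := hG.exists_adj_add_two hv (by omega) hclose
  refine ⟨_, hv.skip hi hchord, ?_⟩
  simpa only [if_neg (show ¬l ≤ i by omega), if_pos (Nat.zero_le i)] using hclose

lemma exists_isPathSeq_of_le (hG : IsChordal G) {k l : ℕ} (hv : G.IsPathSeq v l)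
    (hclose : G.Adj (v l) (v 0)) (hk : 2 ≤ k) (hkl : k ≤ l) :
    ∃ w, G.IsPathSeq w k ∧ G.Adj (w k) (w 0) := by
  induction l, hkl using Nat.le_induction generalizing v with
  | base => exact ⟨v, hv, hclose⟩
  | succ l hkl ih =>
    obtain ⟨w, hw, hwclose⟩ := hG.exists_isPathSeq_pred hv (by omega) hclose
    exact ih hw hwclose

end IsChordal

theorem hamiltonian_chordal_pancyclic_general {V : Type*} [Fintype V] [DecidableEq V]
    (G : SimpleGraph V) (hG : IsChordal G) (hham : G.IsHamiltonian) :
    ∀ m : ℕ, 3 ≤ m → m ≤ Fintype.card V →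
      ∃ (v : V) (c : G.Walk v v), c.IsCycle ∧ c.length = m := by
  intro m hm3 hmn
  obtain ⟨n, rfl⟩ : ∃ n, m = n + 3 := ⟨m - 3, by omega⟩
  obtain ⟨u, c, hc⟩ := hham (by omega)
  obtain ⟨hv, hclose⟩ := hc.isCycle.isPathSeq_getVert
  obtain ⟨w, hw, hwclose⟩ :=
    hG.exists_isPathSeq_of_le (k := n + 2) hv hclose (by omega) (by rw [hc.length_eq]; omega)
  exact (cycleGraph_isContained_iff (by omega)).mp (hw.cycleGraph_isContained hwclose)

/-- Every Hamiltonian chordal graph on `n ≥ 3` vertices is pancyclic: it contains a cycle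
of length `m` for every `3 ≤ m ≤ n`. -/
theorem hamiltonian_chordal_pancyclic {V : Type*} [Fintype V] [DecidableEq V]
    (G : SimpleGraph V) (hG : IsChordal G) (hham : G.IsHamiltonian)
    (hcard : 3 ≤ Fintype.card V) :
    ∀ m : ℕ, 3 ≤ m → m ≤ Fintype.card V →
      ∃ (v : V) (c : G.Walk v v), c.IsCycle ∧ c.length = m :=
  hamiltonian_chordal_pancyclic_general G hG hham
end

section
/- A connected chordal graph with at least 3 vertices is 2-connected if and only if it is locally connected. -/
/-! If `G - v` is connected, two neighbours `a`, `b` of `v` are joined by a shortest path `P`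
in `G - v`. If no inner vertex of `P` is adjacent to `v`, then `v` and `P` form an induced cycle,
which has length at least 4 unless `a = b` or `a ~ b`; otherwise an inner neighbour of `v` on `P`
splits it into shorter paths and induction on the length applies. Conversely, a walk of `G` through
`v` enters and leaves `v` via neighbours of `v`, which can be rejoined inside the connected
neighbourhood, avoiding `v`. Nonemptiness of either side comes from connectivity of `G`. -/

open SimpleGraph

namespace SimpleGraph

lemma cycleGraph_adj_iff_val_s7 {n : ℕ} {u v : Fin (n + 2)} :
    (cycleGraph (n + 2)).Adj u v ↔
      u.val = v.val + 1 ∨ v.val = u.val + 1 ∨ (u.val = 0 ∧ v.val = n + 1) ∨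
        (v.val = 0 ∧ u.val = n + 1) := by
  rw [cycleGraph_adj, sub_eq_iff_eq_add', sub_eq_iff_eq_add', Fin.ext_iff, Fin.ext_iff,
    Fin.val_add_one, Fin.val_add_one]
  have := u.isLt
  have := v.isLt
  split_ifs with hu hv hv <;> simp only [Fin.ext_iff, Fin.val_last] at hu hv <;> omega

lemma cycleGraph_adj_zero_succ {n : ℕ} (i : Fin (n + 1)) :
    (cycleGraph (n + 2)).Adj 0 i.succ ↔ i = 0 ∨ i = Fin.last n := by
  rw [cycleGraph_adj_iff_val_s7, Fin.ext_iff, Fin.ext_iff]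
  simp only [Fin.val_succ, Fin.val_zero, Fin.val_last, true_and]
  have := i.isLt
  omega

lemma cycleGraph_adj_succ_succ {n : ℕ} (i j : Fin (n + 1)) :
    (cycleGraph (n + 2)).Adj i.succ j.succ ↔ (pathGraph (n + 1)).Adj i j := by
  rw [cycleGraph_adj_iff_val_s7, pathGraph_adj]
  simp only [Fin.val_succ]
  omega

variable {V : Type*} {G : SimpleGraph V}

def Embedding.cycleGraphOfPathGraph {n : ℕ} (f : pathGraph (n + 1) ↪g G) (v : V)
    (hv : ∀ i, f i ≠ v) (hadj : ∀ i, G.Adj v (f i) ↔ i = 0 ∨ i = Fin.last n) :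
    cycleGraph (n + 2) ↪g G where
  toFun := Fin.cases v f
  inj' i j hij := by
    cases i using Fin.cases <;> cases j using Fin.cases <;>
      simp_all [eq_comm, f.injective.eq_iff]
  map_rel_iff' {i j} := by
    change G.Adj (Fin.cases v f i) (Fin.cases v f j) ↔ _
    cases i using Fin.cases <;> cases j using Fin.cases <;>
      simp [hadj, G.adj_comm _ v, cycleGraph_adj_zero_succ, cycleGraph_adj_succ_succ,
        (cycleGraph (n + 2)).adj_comm _ 0]

namespace Walk

variable {u w : V}

lemma sub_le_dist_getVert_of_length_eq_dist {p : G.Walk u w} (hp : p.length = G.dist u w)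
    (i : ℕ) {j : ℕ} (hj : j ≤ p.length) : j - i ≤ G.dist (p.getVert i) (p.getVert j) := by
  have hi : G.dist u (p.getVert i) ≤ i :=
    (dist_le (p.take i)).trans ((p.take_length i).trans_le (min_le_left _ _))
  have hj' : G.dist (p.getVert j) w ≤ p.length - j :=
    (dist_le (p.drop j)).trans_eq (p.drop_length j)
  have h₁ := (p.take i).reachable.dist_triangle_left w
  have h₂ := ((p.take i).reachable.symm.trans (p.take j).reachable).dist_triangle_left w
  omega

def pathGraphEmbeddingOfLengthEqDist (p : G.Walk u w) (hp : p.length = G.dist u w) :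
    pathGraph (p.length + 1) ↪g G where
  toFun i := p.getVert i
  inj' i j hij := by
    have hij' := sub_le_dist_getVert_of_length_eq_dist hp i (Nat.lt_succ_iff.mp j.isLt)
    have hji := sub_le_dist_getVert_of_length_eq_dist hp j (Nat.lt_succ_iff.mp i.isLt)
    simp only [hij, dist_self] at hij' hji
    omega
  map_rel_iff' {i j} := by
    change G.Adj (p.getVert i) (p.getVert j) ↔ _
    rw [pathGraph_adj]
    have hi := Nat.lt_succ_iff.mp i.isLt
    have hj := Nat.lt_succ_iff.mp j.isLt
    constructor
    · intro hadj
      have hij := sub_le_dist_getVert_of_length_eq_dist hp i hj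
      have hji := sub_le_dist_getVert_of_length_eq_dist hp j hi
      rw [dist_eq_one_iff_adj.mpr hadj] at hij
      rw [dist_eq_one_iff_adj.mpr hadj.symm] at hji
      have hne : i.val ≠ j.val := fun h ↦ hadj.ne (congrArg p.getVert h)
      omega
    · rintro (h | h)
      · rw [← h]
        exact p.adj_getVert_succ (by omega)
      · rw [← h]
        exact (p.adj_getVert_succ (by omega)).symm

end Walk

lemma reachable_induce_compl_singleton_of_preconnected_neighborSet {v : V}
    (hv : (G.induce (G.neighborSet v)).Preconnected) {x y : ({v}ᶜ : Set V)}
    (hxy : G.Reachable x y) : (G.induce {v}ᶜ).Reachable x y := by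
  have lift : ∀ {a b : V} (ha : G.Adj v a) (hb : G.Adj v b),
      (G.induce {v}ᶜ).Reachable ⟨a, ha.ne'⟩ ⟨b, hb.ne'⟩ := fun ha hb ↦
    (hv ⟨_, ha⟩ ⟨_, hb⟩).map (G.induceHomOfLE (G.neighborSet_subset_compl v)).toHom
  suffices key : ∀ {a b : V} (w : G.Walk a b) (hb : b ≠ v),
      (∀ ha : a ≠ v, (G.induce {v}ᶜ).Reachable ⟨a, ha⟩ ⟨b, hb⟩) ∧
        (a = v → ∀ c (hc : G.Adj v c), (G.induce {v}ᶜ).Reachable ⟨c, hc.ne'⟩ ⟨b, hb⟩) from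
    (key hxy.some y.2).1 x.2
  intro a b w
  induction w with
  | nil => exact fun hb ↦ ⟨fun _ ↦ .rfl, fun ha ↦ absurd ha hb⟩
  | @cons a c b hac w ih =>
    intro hb
    obtain ⟨ih₁, ih₂⟩ := ih hb
    refine ⟨fun ha ↦ ?_, ?_⟩
    · by_cases hc : c = v
      · subst hc
        exact ih₂ rfl a hac.symm
      · exact (show (G.induce {v}ᶜ).Adj ⟨a, ha⟩ ⟨c, hc⟩ from hac).reachable.trans (ih₁ hc)
    · rintro rfl d hd
      exact (lift hd hac).trans (ih₁ hac.ne')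

end SimpleGraph

lemma IsChordal.reachable_induce_neighborSet {V : Type*} {G : SimpleGraph V} (hG : IsChordal G)
    {v : V} {x y : ({v}ᶜ : Set V)} (hx : G.Adj v x) (hy : G.Adj v y)
    (hxy : (G.induce {v}ᶜ).Reachable x y) :
    (G.induce (G.neighborSet v)).Reachable ⟨x, hx⟩ ⟨y, hy⟩ := by
  set H := G.induce ({v}ᶜ : Set V)
  induction hd : H.dist x y using Nat.strong_induction_on generalizing x y with
  | _ d ih =>
  obtain ⟨p, hp⟩ := hxy.exists_walk_length_eq_dist
  by_cases hmid : ∃ i, 0 < i ∧ i < d ∧ G.Adj v (p.getVert i)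
  · obtain ⟨i, hi₀, hid, hvi⟩ := hmid
    have h₁ : H.dist x (p.getVert i) < d :=
      (dist_le (p.take i)).trans_lt (by rw [Walk.take_length]; omega)
    have h₂ : H.dist (p.getVert i) y < d :=
      (dist_le (p.drop i)).trans_lt (by rw [Walk.drop_length]; omega)
    exact (ih _ h₁ hx hvi (p.take i).reachable rfl).trans
      (ih _ h₂ hvi hy (p.drop i).reachable rfl)
  push Not at hmid
  match d, hd with
  | 0, hd =>
    obtain rfl : x = y := (hxy.dist_eq_zero_iff).mp hd
    rfl
  | 1, hd =>
    have hadj : H.Adj x y := dist_eq_one_iff_adj.mp hd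
    exact Adj.reachable hadj
  | d + 2, hd =>
    have hends (i : Fin (p.length + 1)) :
        G.Adj v (p.getVert i) ↔ i = 0 ∨ i = Fin.last p.length := by
      rw [Fin.ext_iff, Fin.ext_iff, Fin.val_zero, Fin.val_last]
      refine ⟨fun hvi ↦ ?_, ?_⟩
      · by_contra! hi
        exact hmid i (Nat.pos_of_ne_zero hi.1) (by omega) hvi
      · rintro (hi | hi)
        · simpa [hi] using hx
        · simpa [hi] using hy
    exact ((hG _ (by omega)).false <| Embedding.cycleGraphOfPathGraph
      ((p.pathGraphEmbeddingOfLengthEqDist hp).trans (Embedding.induce _)) v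
      (fun i ↦ (p.getVert i).2) hends).elim

theorem chordal_twoConnected_iff_locallyConnected_general {V : Type*}
    (G : SimpleGraph V) (hG : IsChordal G) (hconn : G.Connected) :
    (∀ v : V, (G.induce {v}ᶜ).Connected) ↔
      (∀ v : V, (G.induce (G.neighborSet v)).Connected) := by
  refine forall_congr' fun v ↦ ⟨fun h ↦ ?_, fun h ↦ ?_⟩
  · obtain ⟨u, hu⟩ := h.nonempty
    obtain ⟨p⟩ := hconn v u
    have : Nonempty (G.neighborSet v) := ⟨⟨_, p.adj_snd (Walk.not_nil_of_ne (Ne.symm hu))⟩⟩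
    exact ⟨fun a b ↦ hG.reachable_induce_neighborSet (x := ⟨a, a.2.ne'⟩) (y := ⟨b, b.2.ne'⟩)
      a.2 b.2 (h.preconnected _ _)⟩
  · obtain ⟨u, hu⟩ := h.nonempty
    have : Nonempty ({v}ᶜ : Set V) := ⟨⟨u, hu.ne'⟩⟩
    exact ⟨fun a b ↦
      reachable_induce_compl_singleton_of_preconnected_neighborSet h.preconnected (hconn a b)⟩

/-- A connected chordal graph with at least 3 vertices is 2-connected (connected with no
cutvertex) if and only if it is locally connected (every neighbourhood induces a connected
subgraph). -/
theorem chordal_twoConnected_iff_locallyConnected {V : Type*} [Fintype V]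
    (G : SimpleGraph V) (hG : IsChordal G) (hconn : G.Connected)
    (hcard : 3 ≤ Fintype.card V) :
    (∀ v : V, (G.induce {v}ᶜ).Connected) ↔
      (∀ v : V, (G.induce (G.neighborSet v)).Connected) :=
  chordal_twoConnected_iff_locallyConnected_general G hG hconn
end

section
/- Every bull-free chordal graph is sun-free, and hence strongly chordal; in particular, every k-sun (k ≥ 3) contains an induced bull. -/
open SimpleGraph

/-- The bull: a triangle `0,1,2` with pendant edges `0-3` and `1-4`. -/
def bull : SimpleGraph (Fin 5) :=
  SimpleGraph.fromEdgeSet {s(0, 1), s(1, 2), s(0, 2), s(0, 3), s(1, 4)}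

/-- `S` is a `k`-sun with outer vertices `x` and inner vertices `y`: `S` is chordal, its
vertex set is partitioned into `X = {x i}` and `Y = {y i}`, and each `x i` is adjacent
exactly to `y i` and `y (i+1)` (indices mod `k`). -/
def IsSun {W : Type*} (S : SimpleGraph W) (k : ℕ) (x y : ZMod k → W) : Prop :=
  IsChordal S ∧ Function.Injective x ∧ Function.Injective y ∧
  (∀ i j : ZMod k, x i ≠ y j) ∧
  (∀ w : W, (∃ i, w = x i) ∨ (∃ i, w = y i)) ∧
  (∀ i : ZMod k, S.Adj (x i) (y i)) ∧
  (∀ i : ZMod k, S.Adj (x i) (y (i + 1))) ∧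
  (∀ (i : ZMod k) (w : W), S.Adj (x i) w → w = y i ∨ w = y (i + 1))

/-!
In a `k`-sun some two consecutive inner vertices `y j`, `y (j + 1)` are adjacent. Otherwise take
an inner edge `y a ~ y (a + d)` with `d` minimal: the zigzag `y a, x a, y (a + 1), …, x (a + d - 1),
y (a + d)` closes to an induced `(2d + 1)`-cycle, and if there is no inner edge at all the zigzag
around the whole sun is an induced `2k`-cycle; both contradict chordality. Then `y j, y (j + 1),
x j` is a triangle with pendant vertices `x (j - 1)` at `y j` and `x (j + 1)` at `y (j + 1)`, an
induced bull; a sun induced in `G` thus yields a bull in `G`.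
-/

namespace SimpleGraph

variable {α V : Type*} {G : SimpleGraph V}

theorem nonempty_embedding_of_lt [LinearOrder α] {H : SimpleGraph α} (f : α → V)
    (hf : ∀ ⦃i j⦄, i < j → f i ≠ f j ∧ (G.Adj (f i) (f j) ↔ H.Adj i j)) :
    Nonempty (H ↪g G) := by
  have key : ∀ i j, i ≠ j → f i ≠ f j ∧ (G.Adj (f i) (f j) ↔ H.Adj i j) := by
    intro i j hij
    rcases hij.lt_or_gt with h | h
    · exact hf h
    · exact ⟨(hf h).1.symm, by rw [G.adj_comm, H.adj_comm]; exact (hf h).2⟩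
  refine ⟨⟨⟨f, fun i j hij => ?_⟩, fun {i j} => ?_⟩⟩
  · by_contra hne
    exact (key i j hne).1 hij
  · by_cases hij : i = j
    · subst hij
      simp
    · exact (key i j hij).2

theorem cycleGraph_adj_of_lt {m : ℕ} {p q : Fin m} (hpq : p < q) :
    (cycleGraph m).Adj p q ↔ q.val = p.val + 1 ∨ (p.val = 0 ∧ q.val + 1 = m) := by
  have hq := q.isLt
  rw [cycleGraph_adj', Fin.coe_sub_iff_lt.mpr hpq, Fin.coe_sub_iff_le.mpr hpq.le,
    Fin.lt_def] at *
  omega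

end SimpleGraph

theorem ZMod.natCast_eq_natCast_iff_of_lt {k s t : ℕ} (hs : s < k) (ht : t < k) :
    (s : ZMod k) = t ↔ s = t := by
  rw [ZMod.natCast_eq_natCast_iff', Nat.mod_eq_of_lt hs, Nat.mod_eq_of_lt ht]

theorem ZMod.natCast_eq_natCast_add_one_iff {k s t : ℕ} (hs : s < k) (ht : t < k) :
    (s : ZMod k) = t + 1 ↔ s = t + 1 ∨ (s = 0 ∧ t + 1 = k) := by
  rcases (Nat.succ_le_of_lt ht).lt_or_eq with ht' | ht'
  · rw [← Nat.cast_succ, natCast_eq_natCast_iff_of_lt hs ht']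
    omega
  · rw [← Nat.cast_succ, ht', ZMod.natCast_self, ← Nat.cast_zero,
      natCast_eq_natCast_iff_of_lt hs (by omega)]
    omega

namespace IsSun

variable {W : Type*} {S : SimpleGraph W} {k : ℕ} {x y : ZMod k → W}

theorem isChordal (h : IsSun S k x y) : IsChordal S := h.1

theorem injective_x (h : IsSun S k x y) : Function.Injective x := h.2.1

theorem injective_y (h : IsSun S k x y) : Function.Injective y := h.2.2.1

theorem x_ne_y (h : IsSun S k x y) (i j : ZMod k) : x i ≠ y j := h.2.2.2.1 i j

theorem adj_x_iff (h : IsSun S k x y) {i : ZMod k} {w : W} :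
    S.Adj (x i) w ↔ w = y i ∨ w = y (i + 1) := by
  refine ⟨h.2.2.2.2.2.2.2 i w, ?_⟩
  rintro (rfl | rfl)
  exacts [h.2.2.2.2.2.1 i, h.2.2.2.2.2.2.1 i]

theorem not_adj_x_x (h : IsSun S k x y) (i j : ZMod k) : ¬ S.Adj (x i) (x j) := by
  rw [h.adj_x_iff]
  rintro (he | he) <;> exact h.x_ne_y _ _ he

theorem x_add_natCast_inj (h : IsSun S k x y) (a : ZMod k) {s t : ℕ} (hs : s < k) (ht : t < k) :
    x (a + s) = x (a + t) ↔ s = t := by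
  rw [h.injective_x.eq_iff, add_right_inj, ZMod.natCast_eq_natCast_iff_of_lt hs ht]

theorem y_add_natCast_inj (h : IsSun S k x y) (a : ZMod k) {s t : ℕ} (hs : s < k) (ht : t < k) :
    y (a + s) = y (a + t) ↔ s = t := by
  rw [h.injective_y.eq_iff, add_right_inj, ZMod.natCast_eq_natCast_iff_of_lt hs ht]

theorem adj_x_add_natCast_y_add_natCast_iff (h : IsSun S k x y) (a : ZMod k) {s t : ℕ}
    (hs : s < k) (ht : t < k) :
    S.Adj (x (a + t)) (y (a + s)) ↔ s = t ∨ s = t + 1 ∨ (s = 0 ∧ t + 1 = k) := by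
  rw [h.adj_x_iff, h.injective_y.eq_iff, h.injective_y.eq_iff, add_assoc, add_right_inj,
    add_right_inj, ZMod.natCast_eq_natCast_iff_of_lt hs ht, ZMod.natCast_eq_natCast_add_one_iff hs ht]

def zigzag (x y : ZMod k → W) (a : ZMod k) (p : ℕ) : W :=
  if p % 2 = 0 then y (a + (p / 2 : ℕ)) else x (a + (p / 2 : ℕ))

theorem zigzag_two_mul (a : ZMod k) (s : ℕ) : zigzag x y a (2 * s) = y (a + s) := by
  simp [zigzag]

theorem zigzag_two_mul_add_one (a : ZMod k) (s : ℕ) :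
    zigzag x y a (2 * s + 1) = x (a + s) := by
  simp [zigzag, show (2 * s + 1) / 2 = s by omega]

theorem zigzag_ne (h : IsSun S k x y) (a : ZMod k) {p q : ℕ} (hpq : p < q) (hq : q < 2 * k) :
    zigzag x y a p ≠ zigzag x y a q := by
  obtain ⟨s, rfl | rfl⟩ := Nat.even_or_odd' p <;> obtain ⟨t, rfl | rfl⟩ := Nat.even_or_odd' q <;>
    simp only [zigzag_two_mul, zigzag_two_mul_add_one]
  · rw [Ne, h.y_add_natCast_inj a (by omega) (by omega)]; omega
  · exact (h.x_ne_y _ _).symm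
  · exact h.x_ne_y _ _
  · rw [Ne, h.x_add_natCast_inj a (by omega) (by omega)]; omega

theorem zigzag_adj_iff (h : IsSun S k x y) (a : ZMod k) {p q : ℕ} (hpq : p < q) (hq : q < 2 * k)
    (hodd : p % 2 = 1 ∨ q % 2 = 1) :
    S.Adj (zigzag x y a p) (zigzag x y a q) ↔ q = p + 1 ∨ (p = 0 ∧ q + 1 = 2 * k) := by
  obtain ⟨s, rfl | rfl⟩ := Nat.even_or_odd' p <;> obtain ⟨t, rfl | rfl⟩ := Nat.even_or_odd' q <;>
    simp only [zigzag_two_mul, zigzag_two_mul_add_one]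
  · omega
  · rw [S.adj_comm, h.adj_x_add_natCast_y_add_natCast_iff a (by omega) (by omega)]; omega
  · rw [h.adj_x_add_natCast_y_add_natCast_iff a (by omega) (by omega)]; omega
  · exact iff_of_false (h.not_adj_x_x _ _) (by omega)

/-- The first `m` zigzag vertices span an induced `m`-cycle when the walk closes up, either through
the chord `y a ~ y (a + (m - 1) / 2)` (`m` odd) or by going once around the sun (`m = 2 * k`). -/
theorem nonempty_cycleGraph_embedding (h : IsSun S k x y) (a : ZMod k) {m : ℕ}
    (hm : m ≤ 2 * k) (hclosed : m % 2 = 1 ∨ m = 2 * k)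
    (hyy : ∀ s t : ℕ, s < t → 2 * t < m →
      (S.Adj (y (a + s)) (y (a + t)) ↔ s = 0 ∧ 2 * t + 1 = m)) :
    Nonempty (cycleGraph m ↪g S) := by
  refine nonempty_embedding_of_lt (fun p : Fin m => zigzag x y a p) fun p q hpq => ?_
  have hq := q.isLt
  rw [Fin.lt_def] at hpq
  refine ⟨h.zigzag_ne a hpq (by omega), ?_⟩
  rw [cycleGraph_adj_of_lt hpq]
  by_cases heven : p.val % 2 = 0 ∧ q.val % 2 = 0
  · obtain ⟨s, hs⟩ : ∃ s, p.val = 2 * s := ⟨p.val / 2, by omega⟩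
    obtain ⟨t, ht⟩ : ∃ t, q.val = 2 * t := ⟨q.val / 2, by omega⟩
    rw [hs, ht, zigzag_two_mul, zigzag_two_mul, hyy s t (by omega) (by omega)]
    omega
  · rw [h.zigzag_adj_iff a hpq (by omega) (by omega)]
    omega

theorem not_adj_y_of_forall_not_adj_y_succ (h : IsSun S k x y)
    (hsucc : ∀ j, ¬ S.Adj (y j) (y (j + 1))) :
    ∀ d : ℕ, 1 ≤ d → d < k → ∀ a, ¬ S.Adj (y a) (y (a + d)) := by
  intro d
  induction d using Nat.strong_induction_on with
  | _ d ih =>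
  intro hd1 hdk a hadj
  rcases hd1.eq_or_lt with rfl | hd2
  · exact hsucc a (by simpa using hadj)
  have hyy : ∀ s t : ℕ, s < t → 2 * t < 2 * d + 1 →
      (S.Adj (y (a + s)) (y (a + t)) ↔ s = 0 ∧ 2 * t + 1 = 2 * d + 1) := by
    intro s t hst ht
    by_cases hchord : s = 0 ∧ t = d
    · obtain ⟨rfl, rfl⟩ := hchord
      simpa using hadj
    · refine iff_of_false (fun hst' => ih (t - s) (by omega) (by omega) (by omega) (a + s) ?_)
        (by omega)
      rwa [add_assoc, ← Nat.cast_add, Nat.add_sub_cancel' hst.le]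
  obtain ⟨F⟩ := h.nonempty_cycleGraph_embedding a (by omega) (by omega) hyy
  exact (h.isChordal (2 * d + 1) (by omega)).false F

theorem exists_adj_y_succ (h : IsSun S k x y) (hk : 2 ≤ k) : ∃ j, S.Adj (y j) (y (j + 1)) := by
  by_contra! hsucc
  have hyy : ∀ s t : ℕ, s < t → t < k → ¬ S.Adj (y (0 + s)) (y (0 + t)) := by
    intro s t hst ht hadj
    refine h.not_adj_y_of_forall_not_adj_y_succ hsucc (t - s) (by omega) (by omega) s ?_
    rw [← Nat.cast_add, Nat.add_sub_cancel' hst.le]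
    simpa using hadj
  obtain ⟨F⟩ := h.nonempty_cycleGraph_embedding 0 le_rfl (Or.inr rfl)
    fun s t hst ht => iff_of_false (hyy s t hst (by omega)) (by omega)
  exact (h.isChordal (2 * k) (by omega)).false F

theorem nonempty_bull_embedding_of_adj (h : IsSun S k x y) (hk : 3 ≤ k) (a : ZMod k)
    (hadj : S.Adj (y (a + (1 : ℕ))) (y (a + (2 : ℕ)))) : Nonempty (bull ↪g S) := by
  refine nonempty_embedding_of_lt
    ![y (a + (1 : ℕ)), y (a + (2 : ℕ)), x (a + (1 : ℕ)), x (a + (0 : ℕ)), x (a + (2 : ℕ))]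
    fun i j hij => ?_
  fin_cases i <;> fin_cases j <;>
    simp only [Fin.zero_eta, Fin.mk_one, Fin.reduceFinMk, Fin.reduceLT, Matrix.cons_val] at hij ⊢
  all_goals first
    | exact ⟨by rw [Ne, h.y_add_natCast_inj a (by omega) (by omega)]; omega,
        iff_of_true hadj (by simp [bull])⟩
    | exact ⟨(h.x_ne_y _ _).symm, by
        rw [S.adj_comm, h.adj_x_add_natCast_y_add_natCast_iff a (by omega) (by omega)]
        simp [bull]⟩
    | exact ⟨by rw [Ne, h.x_add_natCast_inj a (by omega) (by omega)]; omega,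
        iff_of_false (h.not_adj_x_x _ _) (by simp [bull])⟩

theorem nonempty_bull_embedding (h : IsSun S k x y) (hk : 3 ≤ k) : Nonempty (bull ↪g S) := by
  obtain ⟨j, hj⟩ := h.exists_adj_y_succ (by omega)
  refine h.nonempty_bull_embedding_of_adj hk (j - 1) ?_
  convert hj using 2 <;> push_cast <;> ring

end IsSun

theorem bullFree_chordal_sunFree_general {V : Type*} (G : SimpleGraph V)
    (hbull : IsEmpty (bull ↪g G)) :
    (∀ (A : Set V) (k : ℕ), 3 ≤ k → ∀ x y : ZMod k → A, ¬ IsSun (G.induce A) k x y) ∧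
    (∀ {W : Type} (S : SimpleGraph W) (k : ℕ), 3 ≤ k →
      ∀ x y : ZMod k → W, IsSun S k x y → Nonempty (bull ↪g S)) := by
  refine ⟨fun A k hk x y hsun => ?_, fun S k hk x y hsun => hsun.nonempty_bull_embedding hk⟩
  obtain ⟨F⟩ := hsun.nonempty_bull_embedding hk
  exact hbull.false ((Embedding.induce A).comp F)

/-- Every bull-free chordal graph is sun-free (no induced subgraph is a `k`-sun for `k ≥ 3`),
hence strongly chordal; in particular, every `k`-sun with `k ≥ 3` contains an induced bull. -/
theorem bullFree_chordal_sunFree {V : Type*} (G : SimpleGraph V)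
    (hG : IsChordal G) (hbull : IsEmpty (bull ↪g G)) :
    (∀ (A : Set V) (k : ℕ), 3 ≤ k → ∀ x y : ZMod k → A, ¬ IsSun (G.induce A) k x y) ∧
    (∀ {W : Type} (S : SimpleGraph W) (k : ℕ), 3 ≤ k →
      ∀ x y : ZMod k → W, IsSun S k x y → Nonempty (bull ↪g S)) :=
  bullFree_chordal_sunFree_general G hbull
end
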